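/- arXiv:1708.05254 — 2 statements merged into one kernel-verified Lean document; each statement's English description precedes it below -/
import Mathlib

section
/- Let ‖·‖ be a norm on ℝ^d with closed balls B(x,r), let K : ℝ^d → [0,∞) be a symmetric kernel with tail function κ₁ with respect to ‖·‖, and let P be a λ^d-absolutely continuous probability measure on ℝ^d that has a bounded Lebesgue density h and is normal at level ρ. Then for every δ > 0: (i) if 0 ≤ ρ ≤ ‖h‖_∞ and B(x, σ) ⊆ M_ρ for some x ∈ ℝ^d and σ > 0, then h_{P,δ}(x) ≥ ρ − κ₁(σ/δ)·‖h‖_∞; (ii) if ρ ≥ 0 and B(x, σ) ⊆ ℝ^d ∖ M_ρ for some x ∈ ℝ^d and σ > 0, then h_{P,δ}(x) < ρ + κ₁(σ/δ)·‖h‖_∞. Here ‖h‖_∞ denotes the essential supremum of h. -/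
open MeasureTheory ENNReal

noncomputable section

/-- `N` is a norm on `ℝ^d`. -/
structure IsNormOn (d : ℕ) (N : (Fin d → ℝ) → ℝ) : Prop where
  eq_zero_iff : ∀ x, N x = 0 ↔ x = 0
  smul : ∀ (a : ℝ) (x : Fin d → ℝ), N (a • x) = |a| * N x
  triangle : ∀ x y, N (x + y) ≤ N x + N y

/-- A symmetric kernel on `ℝ^d`: a bounded measurable function `K : ℝ^d → [0,∞)` that is
strictly positive in a neighborhood of `0`, even, and integrates to `1` with respect to
Lebesgue measure. -/
structure IsSymmKernel (d : ℕ) (K : (Fin d → ℝ) → ℝ) : Prop where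
  measurable : Measurable K
  nonneg : ∀ x, 0 ≤ K x
  bddAbove : BddAbove (Set.range K)
  pos_near_zero : ∀ᶠ x in nhds (0 : Fin d → ℝ), 0 < K x
  symm : ∀ x, K (-x) = K x
  integral_one : ∫ x, K x = 1

/-- The tail function `κ₁(r) := ∫_{ℝ^d ∖ B(0,r)} K dλ^d` of a kernel `K`, with respect to
the norm `N`. -/
def kappaOne (d : ℕ) (N K : (Fin d → ℝ) → ℝ) (r : ℝ) : ℝ :=
  ∫ x in {x : Fin d → ℝ | r < N x}, K x

/-- The tail function `κ∞(r) := sup_{x ∈ ℝ^d ∖ B(0,r)} K x` of a kernel `K`, with respect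
to the norm `N`. -/
def kappaInf (d : ℕ) (N K : (Fin d → ℝ) → ℝ) (r : ℝ) : ℝ :=
  sSup (K '' {x : Fin d → ℝ | r < N x})

/-- The infinite-sample kernel density estimator
`h_{P,δ}(x) := δ^{−d} ∫ K((x−y)/δ) dP(y)`. -/
def kdeP (d : ℕ) (K : (Fin d → ℝ) → ℝ) (δ : ℝ) (P : Measure (Fin d → ℝ))
    (x : Fin d → ℝ) : ℝ :=
  (δ ^ d)⁻¹ * ∫ y, K (δ⁻¹ • (x - y)) ∂P

/-- `h` is a Lebesgue density of the measure `P` on `ℝ^d`. -/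
def IsDensityOf (d : ℕ) (P : Measure (Fin d → ℝ)) (h : (Fin d → ℝ) → ℝ) : Prop :=
  Measurable h ∧ (∀ x, 0 ≤ h x) ∧ P = volume.withDensity fun x => ENNReal.ofReal (h x)

/-- `M_ρ`: the support of the measure `A ↦ λ^d(A ∩ {h ≥ ρ})`, i.e. the set of points all
of whose open neighborhoods intersect `{h ≥ ρ}` in a set of positive Lebesgue measure. -/
def Mset (d : ℕ) (h : (Fin d → ℝ) → ℝ) (ρ : ℝ) : Set (Fin d → ℝ) :=
  {x | ∀ U : Set (Fin d → ℝ), IsOpen U → x ∈ U → 0 < volume (U ∩ {y | ρ ≤ h y})}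

/-- `P` (with density `h`) is normal at level `ρ`: there are densities `h₁, h₂` of `P` with
`λ^d(M_ρ ∖ {h₁ ≥ ρ}) = 0` and `λ^d({h₂ > ρ} ∖ int M_ρ) = 0`. -/
def NormalAtLevel (d : ℕ) (P : Measure (Fin d → ℝ)) (h : (Fin d → ℝ) → ℝ) (ρ : ℝ) : Prop :=
  ∃ h₁ h₂, IsDensityOf d P h₁ ∧ IsDensityOf d P h₂ ∧
    volume (Mset d h ρ \ {x | ρ ≤ h₁ x}) = 0 ∧
    volume ({x | ρ < h₂ x} \ interior (Mset d h ρ)) = 0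

/-!
With `w := K_δ(x - ·)`, a probability density on `ℝ^d` giving mass `κ₁(σ/δ)` to the complement
of `B(x, σ)`, one has `h_{P,δ}(x) = ∫ w h`. If `B(x, σ) ⊆ M_ρ`, normality gives `h ≥ ρ` a.e. on
the ball, so `∫ w h ≥ ρ (1 - κ₁(σ/δ))`. If the ball misses `M_ρ`, then `h < ρ` a.e. on it (the
complement of the support of a measure is null); as `w > 0` near `x`, the ball contributes
strictly less than `ρ (1 - κ₁(σ/δ))`, and the tail at most `κ₁(σ/δ) ‖h‖_∞`.
-/

open Filter Topology Set

namespace IsNormOn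

variable {d : ℕ} {N : (Fin d → ℝ) → ℝ}

lemma map_sub_rev (hN : IsNormOn d N) (x y : Fin d → ℝ) : N (x - y) = N (y - x) := by
  rw [← neg_sub, ← neg_one_smul ℝ (y - x), hN.smul, abs_neg, abs_one, one_mul]

lemma convexOn (hN : IsNormOn d N) : ConvexOn ℝ univ N := by
  refine ⟨convex_univ, fun x _ y _ a b ha hb _ => ?_⟩
  calc N (a • x + b • y) ≤ N (a • x) + N (b • y) := hN.triangle _ _
    _ = a • N x + b • N y := by rw [hN.smul, hN.smul, abs_of_nonneg ha, abs_of_nonneg hb]; rfl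

lemma continuous (hN : IsNormOn d N) : Continuous N :=
  continuousOn_univ.mp (hN.convexOn.continuousOn isOpen_univ)

lemma closedBall_mem_nhds (hN : IsNormOn d N) {σ : ℝ} (hσ : 0 < σ) (x : Fin d → ℝ) :
    {y | N (y - x) ≤ σ} ∈ 𝓝 x := by
  have hcont : Continuous fun y => N (y - x) := hN.continuous.comp (continuous_sub_right x)
  have hx : N (x - x) < σ := by rwa [sub_self, (hN.eq_zero_iff 0).2 rfl]
  filter_upwards [hcont.continuousAt.eventually_lt continuousAt_const hx] with y hy using hy.le

lemma measurableSet_closedBall (hN : IsNormOn d N) (x : Fin d → ℝ) (σ : ℝ) :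
    MeasurableSet {y | N (y - x) ≤ σ} :=
  (isClosed_le (hN.continuous.comp (continuous_sub_right x)) continuous_const).measurableSet

end IsNormOn

section WeightedSetIntegral

variable {α : Type*} [MeasurableSpace α] {μ : Measure α} {w f : α → ℝ} {s : Set α} {c : ℝ}

lemma mul_setIntegral_le_setIntegral_mul (hw0 : ∀ y, 0 ≤ w y) (hw : IntegrableOn w s μ)
    (hwf : IntegrableOn (fun y => w y * f y) s μ) (hc : ∀ᵐ y ∂μ.restrict s, c ≤ f y) :
    c * ∫ y in s, w y ∂μ ≤ ∫ y in s, w y * f y ∂μ := by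
  rw [← integral_const_mul]
  refine setIntegral_mono_ae_restrict (hw.const_mul c) hwf ?_
  filter_upwards [hc] with y hy
  rw [mul_comm]
  exact mul_le_mul_of_nonneg_left hy (hw0 y)

lemma setIntegral_mul_le_mul_setIntegral (hw0 : ∀ y, 0 ≤ w y) (hw : IntegrableOn w s μ)
    (hwf : IntegrableOn (fun y => w y * f y) s μ) (hc : ∀ᵐ y ∂μ.restrict s, f y ≤ c) :
    ∫ y in s, w y * f y ∂μ ≤ c * ∫ y in s, w y ∂μ := by
  rw [← integral_const_mul]
  refine setIntegral_mono_ae_restrict hwf (hw.const_mul c) ?_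
  filter_upwards [hc] with y hy
  rw [mul_comm c]
  exact mul_le_mul_of_nonneg_left hy (hw0 y)

lemma setIntegral_mul_lt_mul_setIntegral (hs : MeasurableSet s) (hw0 : ∀ y, 0 ≤ w y)
    (hw : IntegrableOn w s μ) (hwf : IntegrableOn (fun y => w y * f y) s μ)
    (hc : ∀ᵐ y ∂μ.restrict s, f y < c) (hpos : 0 < μ (s ∩ {y | 0 < w y})) :
    ∫ y in s, w y * f y ∂μ < c * ∫ y in s, w y ∂μ := by
  have hgap : IntegrableOn (fun y => w y * (c - f y)) s μ := by
    refine ((hw.const_mul c).sub hwf).congr (ae_of_all _ fun y => ?_)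
    simp only [Pi.sub_apply]
    ring
  have hgap0 : 0 ≤ᵐ[μ.restrict s] fun y => w y * (c - f y) := by
    filter_upwards [hc] with y hy using mul_nonneg (hw0 y) (sub_nonneg.2 hy.le)
  have hsupp : (s ∩ {y | 0 < w y} : Set α)
      ≤ᵐ[μ] (Function.support (fun y => w y * (c - f y)) ∩ s : Set α) := by
    filter_upwards [(ae_restrict_iff' hs).1 hc] with y hy
    rintro ⟨hys, hwy⟩
    exact ⟨mul_ne_zero hwy.ne' (sub_ne_zero.2 (hy hys).ne'), hys⟩
  have hint_pos : 0 < ∫ y in s, w y * (c - f y) ∂μ :=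
    (setIntegral_pos_iff_support_of_nonneg_ae hgap0 hgap).2 (hpos.trans_le (measure_mono_ae hsupp))
  rw [← integral_const_mul, ← sub_pos, ← integral_sub (hw.const_mul c) hwf]
  simpa only [mul_sub, mul_comm _ c] using hint_pos

end WeightedSetIntegral

namespace IsDensityOf

variable {d : ℕ} {P : Measure (Fin d → ℝ)} {h h' : (Fin d → ℝ) → ℝ}

lemma integrable [IsFiniteMeasure P] (hh : IsDensityOf d P h) : Integrable h volume := by
  obtain ⟨hmeas, hnn, hP⟩ := hh
  refine ⟨hmeas.aestronglyMeasurable, (hasFiniteIntegral_iff_ofReal (ae_of_all _ hnn)).2 ?_⟩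
  rw [← setLIntegral_univ, ← withDensity_apply _ MeasurableSet.univ, ← hP]
  exact measure_lt_top P univ

lemma ae_eq (hh : IsDensityOf d P h) (hh' : IsDensityOf d P h') : h =ᵐ[volume] h' := by
  obtain ⟨hmeas, hnn, hP⟩ := hh
  obtain ⟨hmeas', hnn', hP'⟩ := hh'
  have hofReal := (withDensity_eq_iff_of_sigmaFinite hmeas.ennreal_ofReal.aemeasurable
    hmeas'.ennreal_ofReal.aemeasurable).1 (hP.symm.trans hP')
  filter_upwards [hofReal] with y hy using (ENNReal.ofReal_eq_ofReal_iff (hnn y) (hnn' y)).1 hy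

lemma integral_eq_integral_mul (hh : IsDensityOf d P h) (g : (Fin d → ℝ) → ℝ) :
    ∫ y, g y ∂P = ∫ y, g y * h y := by
  obtain ⟨hmeas, hnn, hP⟩ := hh
  rw [hP, integral_withDensity_eq_integral_toReal_smul hmeas.ennreal_ofReal
    (ae_of_all _ fun _ => ENNReal.ofReal_lt_top)]
  simp only [ENNReal.toReal_ofReal (hnn _), smul_eq_mul, mul_comm]

end IsDensityOf

lemma Mset_eq_support (d : ℕ) (h : (Fin d → ℝ) → ℝ) (ρ : ℝ) :
    Mset d h ρ = (volume.restrict {y | ρ ≤ h y}).support := by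
  ext x
  rw [(nhds_basis_opens x).mem_measureSupport]
  refine forall_congr' fun U => ⟨fun hU hxU => ?_, fun hU hUo hxU => ?_⟩
  · rw [Measure.restrict_apply hxU.2.measurableSet]
    exact hU hxU.2 hxU.1
  · simpa only [Measure.restrict_apply hUo.measurableSet] using hU ⟨hxU, hUo⟩

lemma ae_lt_of_notMem_Mset {d : ℕ} {h : (Fin d → ℝ) → ℝ} (hh : Measurable h) (ρ : ℝ) :
    ∀ᵐ y, y ∉ Mset d h ρ → h y < ρ := by
  have hsupp : ∀ᵐ y ∂volume.restrict {y | ρ ≤ h y}, y ∈ Mset d h ρ := by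
    rw [Mset_eq_support]
    exact Measure.support_mem_ae
  rw [ae_restrict_iff' (measurableSet_le measurable_const hh)] at hsupp
  filter_upwards [hsupp] with y hy
  exact fun hyM => not_le.1 fun hρy => hyM (hy hρy)

lemma NormalAtLevel.ae_le_of_mem_Mset {d : ℕ} {P : Measure (Fin d → ℝ)}
    {h h' : (Fin d → ℝ) → ℝ} {ρ : ℝ} (hn : NormalAtLevel d P h ρ) (hh' : IsDensityOf d P h') :
    ∀ᵐ y, y ∈ Mset d h ρ → ρ ≤ h' y := by
  obtain ⟨h₁, -, hh₁, -, hnull, -⟩ := hn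
  filter_upwards [hh₁.ae_eq hh', measure_eq_zero_iff_ae_notMem.1 hnull] with y hy hyM
  intro hy'
  rw [← hy]
  by_contra hlt
  exact hyM ⟨hy', hlt⟩

section HaarRescaling

variable {E F : Type*} [NormedAddCommGroup E] [NormedSpace ℝ E] [MeasurableSpace E] [BorelSpace E]
  [FiniteDimensional ℝ E] (μ : Measure E) [μ.IsAddHaarMeasure] [NormedAddCommGroup F]

lemma integral_comp_inv_smul_sub [NormedSpace ℝ F] [μ.IsNegInvariant] (g : E → F) {δ : ℝ}
    (hδ : 0 ≤ δ) (x : E) :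
    ∫ y, g (δ⁻¹ • (x - y)) ∂μ = δ ^ Module.finrank ℝ E • ∫ z, g z ∂μ := by
  rw [integral_sub_left_eq_self (fun w => g (δ⁻¹ • w)) μ x,
    Measure.integral_comp_inv_smul_of_nonneg μ g hδ]

lemma MeasureTheory.Integrable.comp_inv_smul_sub {g : E → F} (hg : Integrable g μ) {δ : ℝ}
    (hδ : δ ≠ 0) (x : E) : Integrable (fun y => g (δ⁻¹ • (x - y))) μ :=
  ((integrable_comp_smul_iff μ g (inv_ne_zero hδ)).2 hg).comp_sub_left x

end HaarRescaling

/-- The paper's `K_δ`. -/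
def scaledKernel (d : ℕ) (K : (Fin d → ℝ) → ℝ) (δ : ℝ) (z : Fin d → ℝ) : ℝ :=
  (δ ^ d)⁻¹ * K (δ⁻¹ • z)

lemma kdeP_eq_integral_scaledKernel (d : ℕ) (K : (Fin d → ℝ) → ℝ) (δ : ℝ)
    (P : Measure (Fin d → ℝ)) (x : Fin d → ℝ) :
    kdeP d K δ P x = ∫ y, scaledKernel d K δ (x - y) ∂P :=
  (integral_const_mul _ _).symm

lemma setIntegral_scaledKernel_sub_compl {d : ℕ} {N : (Fin d → ℝ) → ℝ} (hN : IsNormOn d N)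
    (K : (Fin d → ℝ) → ℝ) {δ : ℝ} (hδ : 0 < δ) (x : Fin d → ℝ) (σ : ℝ) :
    ∫ y in {y | N (y - x) ≤ σ}ᶜ, scaledKernel d K δ (x - y) = kappaOne d N K (σ / δ) := by
  set T := {z : Fin d → ℝ | σ / δ < N z}
  have hT : MeasurableSet T := measurableSet_lt measurable_const hN.continuous.measurable
  have hpre : {y | N (y - x) ≤ σ}ᶜ = (fun y => δ⁻¹ • (x - y)) ⁻¹' T := by
    ext y
    simp only [T, mem_compl_iff, mem_ofPred_eq, mem_preimage, not_le, hN.smul,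
      abs_of_pos (inv_pos.2 hδ), hN.map_sub_rev x y, inv_mul_eq_div]
    exact (div_lt_div_iff_of_pos_right hδ).symm
  unfold scaledKernel
  rw [hpre, integral_const_mul, ← integral_indicator (hT.preimage (by fun_prop))]
  simp_rw [← Function.comp_def K, indicator_comp_right]
  rw [integral_comp_inv_smul_sub volume _ hδ.le, Module.finrank_fin_fun, smul_eq_mul,
    integral_indicator hT, inv_mul_cancel_left₀ (pow_ne_zero d hδ.ne')]
  rfl

namespace IsSymmKernel

variable {d : ℕ} {K : (Fin d → ℝ) → ℝ} (hK : IsSymmKernel d K) {δ : ℝ} (hδ : 0 < δ)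
include hK

lemma integrable : Integrable K volume :=
  Integrable.of_integral_ne_zero (by rw [hK.integral_one]; exact one_ne_zero)

lemma kappaOne_nonneg (N : (Fin d → ℝ) → ℝ) (r : ℝ) : 0 ≤ kappaOne d N K r :=
  integral_nonneg hK.nonneg

include hδ

lemma scaledKernel_nonneg (z : Fin d → ℝ) : 0 ≤ scaledKernel d K δ z :=
  mul_nonneg (inv_nonneg.2 (pow_nonneg hδ.le d)) (hK.nonneg _)

lemma integrable_scaledKernel_sub (x : Fin d → ℝ) :
    Integrable (fun y => scaledKernel d K δ (x - y)) volume :=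
  (hK.integrable.comp_inv_smul_sub volume hδ.ne' x).const_mul _

lemma integrable_scaledKernel_sub_mul {f : (Fin d → ℝ) → ℝ} (hf : Integrable f volume)
    (x : Fin d → ℝ) : Integrable (fun y => scaledKernel d K δ (x - y) * f y) volume := by
  obtain ⟨C, hC⟩ := hK.bddAbove
  refine hf.bdd_mul (c := (δ ^ d)⁻¹ * C)
    (hK.integrable_scaledKernel_sub hδ x).aestronglyMeasurable (ae_of_all _ fun y => ?_)
  rw [Real.norm_of_nonneg (hK.scaledKernel_nonneg hδ _)]
  exact mul_le_mul_of_nonneg_left (hC ⟨_, rfl⟩) (inv_nonneg.2 (pow_nonneg hδ.le d))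

lemma integral_scaledKernel_sub (x : Fin d → ℝ) :
    ∫ y, scaledKernel d K δ (x - y) = 1 := by
  unfold scaledKernel
  rw [integral_const_mul, integral_comp_inv_smul_sub volume K hδ.le, Module.finrank_fin_fun,
    hK.integral_one, smul_eq_mul, mul_one, inv_mul_cancel₀ (pow_ne_zero d hδ.ne')]

lemma setIntegral_scaledKernel_sub_closedBall {N : (Fin d → ℝ) → ℝ} (hN : IsNormOn d N)
    (x : Fin d → ℝ) (σ : ℝ) :
    ∫ y in {y | N (y - x) ≤ σ}, scaledKernel d K δ (x - y) = 1 - kappaOne d N K (σ / δ) := by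
  rw [← hK.integral_scaledKernel_sub hδ x, ← setIntegral_scaledKernel_sub_compl hN K hδ x σ,
    ← integral_add_compl (hN.measurableSet_closedBall x σ) (hK.integrable_scaledKernel_sub hδ x),
    add_sub_cancel_right]

lemma eventually_scaledKernel_sub_pos (x : Fin d → ℝ) :
    ∀ᶠ y in 𝓝 x, 0 < scaledKernel d K δ (x - y) := by
  have hcont : Continuous fun y : Fin d → ℝ => δ⁻¹ • (x - y) := by fun_prop
  have hK0 : ∀ᶠ y in 𝓝 x, 0 < K (δ⁻¹ • (x - y)) := by
    refine hcont.continuousAt.eventually (p := fun z => 0 < K z) ?_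
    simpa only [sub_self, smul_zero] using hK.pos_near_zero
  filter_upwards [hK0] with y hy using mul_pos (inv_pos.2 (pow_pos hδ d)) hy

end IsSymmKernel

section KdeBounds

variable {d : ℕ} {N K : (Fin d → ℝ) → ℝ} {P : Measure (Fin d → ℝ)} [IsFiniteMeasure P]
  {h : (Fin d → ℝ) → ℝ} {ρ δ σ : ℝ} {x : Fin d → ℝ}

lemma mul_one_sub_kappaOne_le_kdeP (hN : IsNormOn d N) (hK : IsSymmKernel d K)
    (hdens : IsDensityOf d P h) (hnormal : NormalAtLevel d P h ρ) (hδ : 0 < δ)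
    (hsub : {y | N (y - x) ≤ σ} ⊆ Mset d h ρ) :
    ρ * (1 - kappaOne d N K (σ / δ)) ≤ kdeP d K δ P x := by
  set B := {y | N (y - x) ≤ σ}
  have hB : MeasurableSet B := hN.measurableSet_closedBall x σ
  have hint := hK.integrable_scaledKernel_sub_mul hδ hdens.integrable x
  have hρh : ∀ᵐ y ∂volume.restrict B, ρ ≤ h y := by
    rw [ae_restrict_iff' hB]
    filter_upwards [hnormal.ae_le_of_mem_Mset hdens] with y hy hyB using hy (hsub hyB)
  calc ρ * (1 - kappaOne d N K (σ / δ)) = ρ * ∫ y in B, scaledKernel d K δ (x - y) := by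
        rw [hK.setIntegral_scaledKernel_sub_closedBall hδ hN]
    _ ≤ ∫ y in B, scaledKernel d K δ (x - y) * h y :=
        mul_setIntegral_le_setIntegral_mul (fun _ => hK.scaledKernel_nonneg hδ _)
          (hK.integrable_scaledKernel_sub hδ x).integrableOn hint.integrableOn hρh
    _ ≤ ∫ y, scaledKernel d K δ (x - y) * h y :=
        setIntegral_le_integral hint
          (ae_of_all _ fun y => mul_nonneg (hK.scaledKernel_nonneg hδ _) (hdens.2.1 y))
    _ = kdeP d K δ P x := by
        rw [kdeP_eq_integral_scaledKernel, hdens.integral_eq_integral_mul]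

lemma kdeP_lt_of_closedBall_subset_compl_Mset (hN : IsNormOn d N) (hK : IsSymmKernel d K)
    (hdens : IsDensityOf d P h) (hδ : 0 < δ) {M : ℝ} (hM : ∀ᵐ y, h y ≤ M) (hσ : 0 < σ)
    (hsub : {y | N (y - x) ≤ σ} ⊆ (Mset d h ρ)ᶜ) :
    kdeP d K δ P x < ρ * (1 - kappaOne d N K (σ / δ)) + M * kappaOne d N K (σ / δ) := by
  set B := {y | N (y - x) ≤ σ}
  have hB : MeasurableSet B := hN.measurableSet_closedBall x σ
  have hw := hK.integrable_scaledKernel_sub hδ x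
  have hint := hK.integrable_scaledKernel_sub_mul hδ hdens.integrable x
  have hhρ : ∀ᵐ y ∂volume.restrict B, h y < ρ := by
    rw [ae_restrict_iff' hB]
    filter_upwards [ae_lt_of_notMem_Mset hdens.1 ρ] with y hy hyB using hy (hsub hyB)
  have hpos : 0 < volume (B ∩ {y | 0 < scaledKernel d K δ (x - y)}) :=
    Measure.measure_pos_of_mem_nhds _
      (inter_mem (hN.closedBall_mem_nhds hσ x) (hK.eventually_scaledKernel_sub_pos hδ x))
  rw [kdeP_eq_integral_scaledKernel, hdens.integral_eq_integral_mul,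
    ← integral_add_compl hB hint, ← hK.setIntegral_scaledKernel_sub_closedBall hδ hN,
    ← setIntegral_scaledKernel_sub_compl hN K hδ]
  exact add_lt_add_of_lt_of_le
    (setIntegral_mul_lt_mul_setIntegral hB (fun _ => hK.scaledKernel_nonneg hδ _) hw.integrableOn
      hint.integrableOn hhρ hpos)
    (setIntegral_mul_le_mul_setIntegral (fun _ => hK.scaledKernel_nonneg hδ _) hw.integrableOn
      hint.integrableOn (ae_restrict_of_ae hM))

end KdeBounds

theorem kdeP_bounds_of_bounded_density_general {d : ℕ}
    (N : (Fin d → ℝ) → ℝ) (hN : IsNormOn d N)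
    (K : (Fin d → ℝ) → ℝ) (hK : IsSymmKernel d K)
    (P : Measure (Fin d → ℝ)) [IsProbabilityMeasure P]
    (h : (Fin d → ℝ) → ℝ) (hdens : IsDensityOf d P h)
    (hbdd : ∃ C : ℝ, ∀ᵐ x ∂(volume : Measure (Fin d → ℝ)), h x ≤ C)
    (ρ : ℝ) (hρ : 0 ≤ ρ) (hnormal : NormalAtLevel d P h ρ)
    (δ : ℝ) (hδ : 0 < δ) :
    (ρ ≤ essSup h volume →
      ∀ (x : Fin d → ℝ) (σ : ℝ), 0 < σ →
        {y : Fin d → ℝ | N (y - x) ≤ σ} ⊆ Mset d h ρ →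
          ρ - kappaOne d N K (σ / δ) * essSup h volume ≤ kdeP d K δ P x) ∧
    (∀ (x : Fin d → ℝ) (σ : ℝ), 0 < σ →
      {y : Fin d → ℝ | N (y - x) ≤ σ} ⊆ (Mset d h ρ)ᶜ →
        kdeP d K δ P x < ρ + kappaOne d N K (σ / δ) * essSup h volume) := by
  have hM : ∀ᵐ y, h y ≤ essSup h volume := ae_le_essSup (hbdd.imp fun _ hC => hC)
  refine ⟨fun hρM x σ _ hsub => ?_, fun x σ hσ hsub => ?_⟩
  · calc ρ - kappaOne d N K (σ / δ) * essSup h volume ≤ ρ * (1 - kappaOne d N K (σ / δ)) := by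
          nlinarith [hK.kappaOne_nonneg N (σ / δ)]
      _ ≤ kdeP d K δ P x := mul_one_sub_kappaOne_le_kdeP hN hK hdens hnormal hδ hsub
  · calc kdeP d K δ P x
        < ρ * (1 - kappaOne d N K (σ / δ)) + essSup h volume * kappaOne d N K (σ / δ) :=
          kdeP_lt_of_closedBall_subset_compl_Mset hN hK hdens hδ hM hσ hsub
      _ ≤ ρ + kappaOne d N K (σ / δ) * essSup h volume := by
          nlinarith [hK.kappaOne_nonneg N (σ / δ)]

/-- Let `‖·‖` be a norm on `ℝ^d`, `K` a symmetric kernel with tail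
function `κ₁`, and `P` a Lebesgue-absolutely continuous probability measure on `ℝ^d` with
bounded Lebesgue density `h` that is normal at level `ρ ≥ 0`.  Then for every `δ > 0`:
(i) if `ρ ≤ ‖h‖_∞` and `B(x,σ) ⊆ M_ρ` for some `x`, `σ > 0`, then
`h_{P,δ}(x) ≥ ρ − κ₁(σ/δ)·‖h‖_∞`; (ii) if `B(x,σ) ⊆ ℝ^d ∖ M_ρ` for some `x`, `σ > 0`,
then `h_{P,δ}(x) < ρ + κ₁(σ/δ)·‖h‖_∞`.  Here `‖h‖_∞` is the essential supremum of `h`. -/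
theorem kdeP_bounds_of_bounded_density {d : ℕ} (hd : 0 < d)
    (N : (Fin d → ℝ) → ℝ) (hN : IsNormOn d N)
    (K : (Fin d → ℝ) → ℝ) (hK : IsSymmKernel d K)
    (P : Measure (Fin d → ℝ)) [IsProbabilityMeasure P]
    (h : (Fin d → ℝ) → ℝ) (hdens : IsDensityOf d P h)
    (hbdd : ∃ C : ℝ, ∀ᵐ x ∂(volume : Measure (Fin d → ℝ)), h x ≤ C)
    (ρ : ℝ) (hρ : 0 ≤ ρ) (hnormal : NormalAtLevel d P h ρ)
    (δ : ℝ) (hδ : 0 < δ) :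
    (ρ ≤ essSup h volume →
      ∀ (x : Fin d → ℝ) (σ : ℝ), 0 < σ →
        {y : Fin d → ℝ | N (y - x) ≤ σ} ⊆ Mset d h ρ →
          ρ - kappaOne d N K (σ / δ) * essSup h volume ≤ kdeP d K δ P x) ∧
    (∀ (x : Fin d → ℝ) (σ : ℝ), 0 < σ →
      {y : Fin d → ℝ | N (y - x) ≤ σ} ⊆ (Mset d h ρ)ᶜ →
        kdeP d K δ P x < ρ + kappaOne d N K (σ / δ) * essSup h volume) :=
  kdeP_bounds_of_bounded_density_general N hN K hK P h hdens hbdd ρ hρ hnormal δ hδ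
end
end

section
/- Let K : ℝ^d → [0,∞) be a symmetric kernel that is α-Hölder continuous with respect to a norm ‖·‖ on ℝ^d, i.e. |K(x) − K(y)| ≤ |K|_α ‖x − y‖^α for all x, y, where α ∈ (0,1] and |K|_α > 0 is its α-Hölder constant. Let X ⊆ ℝ^d be compact and let C(X) > 0 be a constant such that N(X, ‖·‖, ε) ≤ C(X)·ε^{−d} for all 0 < ε ≤ diam_{‖·‖}(X). For δ > 0 let 𝒦_δ := { K_δ(x − ·) : x ∈ X } with K_δ := δ^{−d} K(·/δ). Then for every δ > 0 with δ ≤ (|K|_α / ‖K‖_∞)^{1/α}·diam_{‖·‖}(X), every 0 < ε ≤ δ^{−d}‖K‖_∞, and every probability measure Q on ℝ^d: N(𝒦_δ, L₂(Q), ε) ≤ C(X)·( |K|_α / (δ^{α+d} ε) )^{d/α}. -/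
open MeasureTheory ENNReal

noncomputable section

/-- The `ε`-covering number of a class `G` of functions on `ℝ^d`, viewed as a subset of
`L₂(P)`: the least number of closed `L₂(P)`-balls of radius `ε` (with arbitrary function
centers) needed to cover `G`; `∞` if no finite cover exists. -/
def covNum (d : ℕ) (P : Measure (Fin d → ℝ)) (G : Set ((Fin d → ℝ) → ℝ)) (ε : ℝ) :
    ℝ≥0∞ :=
  sInf {m : ℝ≥0∞ | ∃ s : Finset ((Fin d → ℝ) → ℝ), (s.card : ℝ≥0∞) = m ∧
    ∀ g ∈ G, ∃ f ∈ s,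
      (∫⁻ x, ENNReal.ofReal ((g x - f x) ^ 2) ∂P) ≤ ENNReal.ofReal (ε ^ 2)}

/-- The `ε`-covering number of a set `X ⊆ ℝ^d` with respect to the norm `N`. -/
def covSetNum (d : ℕ) (N : (Fin d → ℝ) → ℝ) (X : Set (Fin d → ℝ)) (ε : ℝ) : ℝ≥0∞ :=
  sInf {m : ℝ≥0∞ | ∃ s : Finset (Fin d → ℝ), (s.card : ℝ≥0∞) = m ∧
    ∀ x ∈ X, ∃ y ∈ s, N (x - y) ≤ ε}

/-- The diameter of a set `X ⊆ ℝ^d` with respect to the norm `N`. -/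
def diamN (d : ℕ) (N : (Fin d → ℝ) → ℝ) (X : Set (Fin d → ℝ)) : ℝ :=
  sSup {r : ℝ | ∃ x ∈ X, ∃ y ∈ X, r = N (x - y)}

/-!
Hölder continuity of `K` makes `x ↦ K_δ(x - ·)` uniformly `α`-Hölder with constant
`|K|_α δ^{-(α+d)}`, so an `r`-cover of `X` with `r^α = ε δ^{α+d} / |K|_α` is mapped to an
`ε`-cover of `𝒦_δ` in the supremum norm, hence in `L₂(Q)` for every probability measure `Q`.
The constraints on `δ` and `ε` give `r ≤ diam X`, so the covering bound for `X` applies at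
scale `r`, and `r^{-d}` is the claimed bound.
-/

namespace IsNormOn

variable {d : ℕ} {N : (Fin d → ℝ) → ℝ}

theorem map_neg (hN : IsNormOn d N) (x : Fin d → ℝ) : N (-x) = N x := by
  simpa using hN.smul (-1) x

theorem nonneg (hN : IsNormOn d N) (x : Fin d → ℝ) : 0 ≤ N x := by
  have h := hN.triangle x (-x)
  rw [add_neg_cancel, (hN.eq_zero_iff 0).mpr rfl, hN.map_neg] at h
  linarith

end IsNormOn

theorem IsSymmKernel.sSup_range_pos {d : ℕ} {K : (Fin d → ℝ) → ℝ}
    (hK : IsSymmKernel d K) : 0 < sSup (Set.range K) :=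
  hK.pos_near_zero.self_of_nhds.trans_le (le_csSup hK.bddAbove ⟨0, rfl⟩)

theorem abs_sub_rescaled_le_of_holder {d : ℕ} {N K : (Fin d → ℝ) → ℝ} (hN : IsNormOn d N)
    {α L : ℝ} (hHolder : ∀ x y, |K x - K y| ≤ L * N (x - y) ^ α) {δ : ℝ} (hδ : 0 < δ)
    (x y z : Fin d → ℝ) :
    |(δ ^ d)⁻¹ * K (δ⁻¹ • (x - z)) - (δ ^ d)⁻¹ * K (δ⁻¹ • (y - z))| ≤
      L / δ ^ (α + (d : ℝ)) * N (x - y) ^ α := by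
  have hsub : δ⁻¹ • (x - z) - δ⁻¹ • (y - z) = δ⁻¹ • (x - y) := by
    rw [← smul_sub, sub_sub_sub_cancel_right]
  have hdiff := hHolder (δ⁻¹ • (x - z)) (δ⁻¹ • (y - z))
  rw [hsub, hN.smul, abs_of_pos (inv_pos.mpr hδ), Real.mul_rpow (by positivity) (hN.nonneg _),
    Real.inv_rpow hδ.le] at hdiff
  calc |(δ ^ d)⁻¹ * K (δ⁻¹ • (x - z)) - (δ ^ d)⁻¹ * K (δ⁻¹ • (y - z))|
      = (δ ^ d)⁻¹ * |K (δ⁻¹ • (x - z)) - K (δ⁻¹ • (y - z))| := by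
        rw [← mul_sub, abs_mul, abs_of_pos (by positivity)]
    _ ≤ (δ ^ d)⁻¹ * (L * ((δ ^ α)⁻¹ * N (x - y) ^ α)) := by gcongr
    _ = L / δ ^ (α + (d : ℝ)) * N (x - y) ^ α := by
        rw [Real.rpow_add hδ, Real.rpow_natCast]
        field_simp

theorem lintegral_ofReal_sq_sub_le {Ω : Type*} [MeasurableSpace Ω] (Q : Measure Ω)
    [IsZeroOrProbabilityMeasure Q] {f g : Ω → ℝ} {ε : ℝ} (h : ∀ x, |f x - g x| ≤ ε) :
    ∫⁻ x, ENNReal.ofReal ((f x - g x) ^ 2) ∂Q ≤ ENNReal.ofReal (ε ^ 2) :=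
  calc ∫⁻ x, ENNReal.ofReal ((f x - g x) ^ 2) ∂Q ≤ ∫⁻ _, ENNReal.ofReal (ε ^ 2) ∂Q :=
        lintegral_mono fun x => ENNReal.ofReal_le_ofReal <| by
          rw [← sq_abs]
          exact pow_le_pow_left₀ (abs_nonneg _) (h x) 2
    _ = ENNReal.ofReal (ε ^ 2) * Q Set.univ := lintegral_const _
    _ ≤ ENNReal.ofReal (ε ^ 2) := mul_le_of_le_one_right' prob_le_one

theorem covNum_le_covSetNum {d : ℕ} (Q : Measure (Fin d → ℝ)) (N : (Fin d → ℝ) → ℝ)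
    (X : Set (Fin d → ℝ)) (F : (Fin d → ℝ) → (Fin d → ℝ) → ℝ) {r ε : ℝ}
    (hF : ∀ x y, N (x - y) ≤ r →
      ∫⁻ z, ENNReal.ofReal ((F x z - F y z) ^ 2) ∂Q ≤ ENNReal.ofReal (ε ^ 2)) :
    covNum d Q {f | ∃ x ∈ X, f = F x} ε ≤ covSetNum d N X r := by
  classical
  refine le_sInf ?_
  rintro m ⟨s, rfl, hs⟩
  refine sInf_le_of_le ⟨s.image F, rfl, ?_⟩ (by exact_mod_cast Finset.card_image_le)
  rintro g ⟨x, hx, rfl⟩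
  obtain ⟨y, hy, hxy⟩ := hs x hx
  exact ⟨F y, Finset.mem_image_of_mem F hy, hF x y hxy⟩

/-- The distance in `(ℝ^d, N)` below which the rescaled kernels `K_δ(x - ·)` of an `α`-Hölder
kernel with constant `L` are uniformly `ε`-close. -/
def holderRadius (d : ℕ) (α L δ ε : ℝ) : ℝ :=
  (ε * δ ^ (α + (d : ℝ)) / L) ^ (1 / α)

section holderRadius

variable {d : ℕ} {α L δ ε : ℝ}

theorem holderRadius_pos (hL : 0 < L) (hδ : 0 < δ) (hε : 0 < ε) :
    0 < holderRadius d α L δ ε := by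
  unfold holderRadius
  positivity

theorem holderRadius_rpow (hα : 0 < α) (hL : 0 < L) (hδ : 0 < δ) (hε : 0 < ε) :
    holderRadius d α L δ ε ^ α = ε * δ ^ (α + (d : ℝ)) / L := by
  rw [holderRadius, ← Real.rpow_mul (by positivity), one_div_mul_cancel hα.ne', Real.rpow_one]

theorem holderRadius_rpow_neg_natCast (hL : 0 < L) (hδ : 0 < δ) (hε : 0 < ε) :
    holderRadius d α L δ ε ^ (-(d : ℝ)) =
      (L / (δ ^ (α + (d : ℝ)) * ε)) ^ ((d : ℝ) / α) := by
  have hx : 0 < ε * δ ^ (α + (d : ℝ)) / L := by positivity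
  rw [holderRadius, ← Real.rpow_mul hx.le, show L / (δ ^ (α + (d : ℝ)) * ε) =
    (ε * δ ^ (α + (d : ℝ)) / L)⁻¹ by rw [inv_div, mul_comm], Real.inv_rpow hx.le,
    ← Real.rpow_neg hx.le]
  congr 1
  ring

theorem holder_bound_le_of_le_holderRadius (hα : 0 < α) (hL : 0 < L) (hδ : 0 < δ)
    (hε : 0 < ε) {t : ℝ} (ht : 0 ≤ t) (htr : t ≤ holderRadius d α L δ ε) :
    L / δ ^ (α + (d : ℝ)) * t ^ α ≤ ε := by
  have hδαd : 0 < δ ^ (α + (d : ℝ)) := by positivity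
  calc L / δ ^ (α + (d : ℝ)) * t ^ α
      ≤ L / δ ^ (α + (d : ℝ)) * holderRadius d α L δ ε ^ α := by gcongr
    _ = ε := by
        rw [holderRadius_rpow hα hL hδ hε]
        field_simp

theorem holderRadius_le (hα : 0 < α) (hL : 0 < L) (hδ : 0 < δ) (hε : 0 < ε) {S D : ℝ}
    (hS : 0 < S) (hδle : δ ≤ (L / S) ^ (1 / α) * D) (hεle : ε ≤ (δ ^ d)⁻¹ * S) :
    holderRadius d α L δ ε ≤ D := by
  have hD : 0 < D := pos_of_mul_pos_right (hδ.trans_le hδle) (by positivity)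
  have hδα : δ ^ α ≤ L / S * D ^ α := by
    calc δ ^ α ≤ ((L / S) ^ (1 / α) * D) ^ α := Real.rpow_le_rpow hδ.le hδle hα.le
      _ = L / S * D ^ α := by
        rw [Real.mul_rpow (by positivity) hD.le, ← Real.rpow_mul (by positivity),
          one_div_mul_cancel hα.ne', Real.rpow_one]
  refine (Real.rpow_le_rpow_iff (holderRadius_pos hL hδ hε).le hD.le hα).mp ?_
  calc holderRadius d α L δ ε ^ α
      = ε * δ ^ (α + (d : ℝ)) / L := holderRadius_rpow hα hL hδ hε
    _ ≤ (δ ^ d)⁻¹ * S * δ ^ (α + (d : ℝ)) / L := by gcongr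
    _ = S / L * δ ^ α := by
        rw [Real.rpow_add hδ, Real.rpow_natCast]
        field_simp
    _ ≤ S / L * (L / S * D ^ α) := by gcongr
    _ = D ^ α := by field_simp

end holderRadius

theorem covNum_holder_kernel_general {d : ℕ}
    (N : (Fin d → ℝ) → ℝ) (hN : IsNormOn d N)
    (K : (Fin d → ℝ) → ℝ) (hK : IsSymmKernel d K)
    (α L : ℝ) (hα : 0 < α) (hL : 0 < L)
    (hHolder : ∀ x y, |K x - K y| ≤ L * N (x - y) ^ α)
    (X : Set (Fin d → ℝ))
    (C : ℝ)
    (hcov : ∀ ε : ℝ, 0 < ε → ε ≤ diamN d N X →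
      covSetNum d N X ε ≤ ENNReal.ofReal (C * ε ^ (-(d : ℝ))))
    (δ : ℝ) (hδ : 0 < δ)
    (hδle : δ ≤ (L / sSup (Set.range K)) ^ (1 / α) * diamN d N X)
    (ε : ℝ) (hε : 0 < ε) (hεle : ε ≤ (δ ^ d)⁻¹ * sSup (Set.range K))
    (Q : Measure (Fin d → ℝ)) [IsProbabilityMeasure Q] :
    covNum d Q {f | ∃ x ∈ X, f = fun y => (δ ^ d)⁻¹ * K (δ⁻¹ • (x - y))} ε ≤
      ENNReal.ofReal (C * (L / (δ ^ (α + (d : ℝ)) * ε)) ^ ((d : ℝ) / α)) := by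
  set r := holderRadius d α L δ ε
  have hclose : ∀ x y, N (x - y) ≤ r →
      ∫⁻ z, ENNReal.ofReal
        (((δ ^ d)⁻¹ * K (δ⁻¹ • (x - z)) - (δ ^ d)⁻¹ * K (δ⁻¹ • (y - z))) ^ 2) ∂Q ≤
        ENNReal.ofReal (ε ^ 2) := fun x y hxy =>
    lintegral_ofReal_sq_sub_le Q fun z =>
      (abs_sub_rescaled_le_of_holder hN hHolder hδ x y z).trans
        (holder_bound_le_of_le_holderRadius hα hL hδ hε (hN.nonneg _) hxy)
  calc _ ≤ covSetNum d N X r := covNum_le_covSetNum Q N X _ hclose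
    _ ≤ ENNReal.ofReal (C * r ^ (-(d : ℝ))) :=
        hcov r (holderRadius_pos hL hδ hε)
          (holderRadius_le hα hL hδ hε hK.sSup_range_pos hδle hεle)
    _ = _ := by rw [holderRadius_rpow_neg_natCast hL hδ hε]

/-- Let `K` be a symmetric kernel that is `α`-Hölder continuous with
respect to a norm `‖·‖` on `ℝ^d`, with Hölder constant `|K|_α`, let `X ⊆ ℝ^d` be compact
and `C(X) > 0` with `N(X, ‖·‖, ε) ≤ C(X)·ε^{−d}` for all `0 < ε ≤ diam X`.  Then for all
`δ > 0` with `δ ≤ (|K|_α/‖K‖_∞)^{1/α}·diam X`, all `0 < ε ≤ δ^{−d}‖K‖_∞`, and every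
probability measure `Q` on `ℝ^d`, the class `𝒦_δ := { K_δ(x−·) : x ∈ X }` satisfies
`N(𝒦_δ, L₂(Q), ε) ≤ C(X)·(|K|_α/(δ^{α+d} ε))^{d/α}`. -/
theorem covNum_holder_kernel {d : ℕ} (hd : 0 < d)
    (N : (Fin d → ℝ) → ℝ) (hN : IsNormOn d N)
    (K : (Fin d → ℝ) → ℝ) (hK : IsSymmKernel d K)
    (α L : ℝ) (hα : 0 < α) (hα1 : α ≤ 1) (hL : 0 < L)
    (hHolder : ∀ x y, |K x - K y| ≤ L * N (x - y) ^ α)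
    (X : Set (Fin d → ℝ)) (hX : IsCompact X)
    (C : ℝ) (hC : 0 < C)
    (hcov : ∀ ε : ℝ, 0 < ε → ε ≤ diamN d N X →
      covSetNum d N X ε ≤ ENNReal.ofReal (C * ε ^ (-(d : ℝ))))
    (δ : ℝ) (hδ : 0 < δ)
    (hδle : δ ≤ (L / sSup (Set.range K)) ^ (1 / α) * diamN d N X)
    (ε : ℝ) (hε : 0 < ε) (hεle : ε ≤ (δ ^ d)⁻¹ * sSup (Set.range K))
    (Q : Measure (Fin d → ℝ)) [IsProbabilityMeasure Q] :
    covNum d Q {f | ∃ x ∈ X, f = fun y => (δ ^ d)⁻¹ * K (δ⁻¹ • (x - y))} ε ≤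
      ENNReal.ofReal (C * (L / (δ ^ (α + (d : ℝ)) * ε)) ^ ((d : ℝ) / α)) :=
  covNum_holder_kernel_general N hN K hK α L hα hL hHolder X C hcov δ hδ hδle ε hε hεle Q
end
end
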